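/- arXiv:2601.01607 — 3 statements merged into one kernel-verified Lean document; each statement's English description precedes it below -/
import Mathlib

section
/- Let μ = (q,s) be an IC, IR, and NPT Γ-mechanism, and let b : ℝ^k → ℝ be its extended buyer payoff function b(x) := sup_{z ∈ ℝ_+^k} [q(z)·x − s(z)]. Then b belongs to B_Γ (b is convex, b(0) = 0, and ∂b(x) ∩ Γ ≠ ∅ for every x ∈ ℝ^k), and for every x ∈ ℝ_+^k the vector q(x) is a subgradient of b at x, i.e., q(x) ∈ ∂b(x) ∩ Γ. -/
open MeasureTheory Filter

noncomputable section

abbrev E (k : ℕ) := EuclideanSpace ℝ (Fin k)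

def orthant (k : ℕ) : Set (E k) := {x | ∀ i, 0 ≤ x i}

/-- The dot product `g · x` on `ℝ^k`. -/
def dotp {k : ℕ} (g x : E k) : ℝ := ∑ i, g i * x i

def IsAlloc {k : ℕ} (Γ : Set (E k)) (q : E k → E k) : Prop :=
  ∀ x ∈ orthant k, q x ∈ Γ

def IsIC {k : ℕ} (q : E k → E k) (s : E k → ℝ) : Prop :=
  ∀ x ∈ orthant k, ∀ y ∈ orthant k, dotp (q x) x - s x ≥ dotp (q y) x - s y

def IsIR {k : ℕ} (q : E k → E k) (s : E k → ℝ) : Prop :=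
  ∀ x ∈ orthant k, 0 ≤ dotp (q x) x - s x

def IsNPT {k : ℕ} (s : E k → ℝ) : Prop :=
  ∀ x ∈ orthant k, 0 ≤ s x

/-- The set of subgradients of `f` at `x`. -/
def Subgrad {k : ℕ} (f : E k → ℝ) (x : E k) : Set (E k) :=
  {g | ∀ y, f y - f x ≥ dotp g (y - x)}

/-- `b ∈ B_Γ`: convex on `ℝ^k`, `b 0 = 0`, and a subgradient in `Γ` at every point. -/
def BClass {k : ℕ} (Γ : Set (E k)) (b : E k → ℝ) : Prop :=
  ConvexOn ℝ Set.univ b ∧ b 0 = 0 ∧ ∀ x, (Subgrad b x ∩ Γ).Nonempty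

/-- One-sided directional derivative `f′(x;y) = lim_{δ→0⁺} (f(x+δy)-f(x))/δ`. -/
def dirDeriv {k : ℕ} (b : E k → ℝ) (x y : E k) : ℝ :=
  limUnder (nhdsWithin (0:ℝ) (Set.Ioi 0)) fun δ => (b (x + δ • y) - b x) / δ

/-- The extended buyer payoff function `b(x) = sup_{z ∈ ℝ₊^k} [q(z)·x − s(z)]`. -/
def extPayoff {k : ℕ} (q : E k → E k) (s : E k → ℝ) (x : E k) : ℝ :=
  sSup ((fun z => dotp (q z) x - s z) '' orthant k)

def SellerFavorable {k : ℕ} (q : E k → E k) (s : E k → ℝ) : Prop :=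
  ∀ x ∈ orthant k, s x = dirDeriv (extPayoff q s) x x - extPayoff q s x

/-! The extended payoff `b` is the upper envelope of the affine functions
`x ↦ q(z)·x − s(z)`, whose slopes lie in the compact set `Γ` and whose intercepts are `≤ 0` by NPT;
so `b` is finite and convex. By IC the envelope is attained at `z = x` for `x ∈ ℝ₊^k`, which makes
`q(x)` a subgradient there, and at an arbitrary `x` a limit point of the slopes along a maximizing
sequence is a subgradient lying in `Γ`. Finally `b 0 = -s 0`, which vanishes by IR and NPT. -/

open Set
open scoped InnerProductSpace Topology

lemma dotp_eq_inner {k : ℕ} (g x : E k) : dotp g x = ⟪g, x⟫_ℝ := by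
  simp [dotp, PiLp.inner_apply, mul_comm]

lemma mem_Subgrad_iff {k : ℕ} {f : E k → ℝ} {x g : E k} :
    g ∈ Subgrad f x ↔ ∀ y, ⟪g, y - x⟫_ℝ ≤ f y - f x := by
  simp [Subgrad, dotp_eq_inner]

section AffineSup

variable {ι F : Type*} [NormedAddCommGroup F] [InnerProductSpace ℝ F] {a : ι → F} {c : ι → ℝ}

lemma bddAbove_range_inner_sub {R m : ℝ} (ha : ∀ i, ‖a i‖ ≤ R) (hc : ∀ i, m ≤ c i) (x : F) :
    BddAbove (range fun i => ⟪a i, x⟫_ℝ - c i) := by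
  refine ⟨R * ‖x‖ - m, forall_mem_range.2 fun i => ?_⟩
  have := (real_inner_le_norm (a i) x).trans (mul_le_mul_of_nonneg_right (ha i) (norm_nonneg x))
  linarith [hc i]

lemma convexOn_iSup_inner_sub [Nonempty ι]
    (hbdd : ∀ x, BddAbove (range fun i => ⟪a i, x⟫_ℝ - c i)) :
    ConvexOn ℝ univ fun x => ⨆ i, ⟪a i, x⟫_ℝ - c i := by
  refine ⟨convex_univ, fun x _ y _ s t hs ht hst => ciSup_le fun i => ?_⟩
  have hx := mul_le_mul_of_nonneg_left (le_ciSup (hbdd x) i) hs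
  have hy := mul_le_mul_of_nonneg_left (le_ciSup (hbdd y) i) ht
  calc ⟪a i, s • x + t • y⟫_ℝ - c i
      = s * (⟪a i, x⟫_ℝ - c i) + t * (⟪a i, y⟫_ℝ - c i) := by
        rw [inner_add_right, real_inner_smul_right, real_inner_smul_right]
        linear_combination c i * hst
    _ ≤ _ := by simp only [smul_eq_mul]; linarith

lemma inner_sub_le_of_iSup_eq (hbdd : ∀ x, BddAbove (range fun i => ⟪a i, x⟫_ℝ - c i))
    {x : F} {i : ι} (hi : (⨆ j, ⟪a j, x⟫_ℝ - c j) = ⟪a i, x⟫_ℝ - c i) (y : F) :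
    ⟪a i, y - x⟫_ℝ ≤ (⨆ j, ⟪a j, y⟫_ℝ - c j) - ⨆ j, ⟪a j, x⟫_ℝ - c j := by
  rw [hi, inner_sub_right]
  linarith [le_ciSup (hbdd y) i]

lemma exists_mem_inner_sub_le_of_isCompact [Nonempty ι] {K : Set F} (hK : IsCompact K)
    (haK : ∀ i, a i ∈ K) (hbdd : ∀ x, BddAbove (range fun i => ⟪a i, x⟫_ℝ - c i)) (x : F) :
    ∃ g ∈ K, ∀ y, ⟪g, y - x⟫_ℝ ≤ (⨆ i, ⟪a i, y⟫_ℝ - c i) - ⨆ i, ⟪a i, x⟫_ℝ - c i := by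
  obtain ⟨u, -, hu, hu_mem⟩ := exists_seq_tendsto_sSup (range_nonempty _) (hbdd x)
  choose i hi using hu_mem
  obtain ⟨g, hgK, φ, hφ, hg⟩ := hK.tendsto_subseq fun n => haK (i n)
  have hinner : ∀ z, Tendsto (fun n => ⟪a (i (φ n)), z⟫_ℝ) atTop (𝓝 ⟪g, z⟫_ℝ) := fun z =>
    ((continuous_id.inner continuous_const).tendsto g).comp hg
  have hc : Tendsto (fun n => c (i (φ n))) atTop (𝓝 (⟪g, x⟫_ℝ - ⨆ i, ⟪a i, x⟫_ℝ - c i)) := by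
    convert (hinner x).sub (hu.comp hφ.tendsto_atTop) using 1
    · ext n
      simp [← hi]
    · rfl
  refine ⟨g, hgK, fun y => ?_⟩
  have hle := le_of_tendsto' ((hinner y).sub hc) fun n => le_ciSup (hbdd y) (i (φ n))
  rw [inner_sub_right]
  linarith

end AffineSup

theorem stmt1_general {k : ℕ} (Γ : Set (E k))
    (hΓc : IsCompact Γ)
    (q : E k → E k) (s : E k → ℝ)
    (hq : IsAlloc Γ q) (hIC : IsIC q s) (hIR : IsIR q s) (hNPT : IsNPT s) :
    BClass Γ (extPayoff q s) ∧
      ∀ x ∈ orthant k, q x ∈ Subgrad (extPayoff q s) x ∩ Γ := by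
  have hb : extPayoff q s = fun x => ⨆ z : orthant k, ⟪q z, x⟫_ℝ - s z := by
    ext x
    simp only [extPayoff, dotp_eq_inner, image_eq_range]
    rfl
  have h0 : (0 : E k) ∈ orthant k := fun _ => le_rfl
  have : Nonempty (orthant k) := ⟨⟨0, h0⟩⟩
  have hqΓ : ∀ z : orthant k, q z ∈ Γ := fun z => hq z z.2
  obtain ⟨R, hR⟩ := hΓc.isBounded.exists_norm_le
  have hbdd := bddAbove_range_inner_sub (fun z => hR _ (hqΓ z)) (fun z : orthant k => hNPT z z.2)
  have hatt : ∀ x ∈ orthant k, (⨆ z : orthant k, ⟪q z, x⟫_ℝ - s z) = ⟪q x, x⟫_ℝ - s x :=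
    fun x hx => le_antisymm (ciSup_le fun z => by simpa [dotp_eq_inner] using hIC x hx z z.2)
      (le_ciSup (hbdd x) ⟨x, hx⟩)
  simp only [BClass, hb, Set.Nonempty, mem_inter_iff, mem_Subgrad_iff]
  refine ⟨⟨convexOn_iSup_inner_sub hbdd, ?_, fun x => ?_⟩, fun x hx => ⟨?_, hq x hx⟩⟩
  · have hIR0 := hIR 0 h0
    rw [hatt 0 h0]
    simp only [dotp_eq_inner, inner_zero_right] at hIR0 ⊢
    linarith [hNPT 0 h0]
  · obtain ⟨g, hgΓ, hg⟩ := exists_mem_inner_sub_le_of_isCompact hΓc hqΓ hbdd x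
    exact ⟨g, hg, hgΓ⟩
  · exact inner_sub_le_of_iSup_eq (i := ⟨x, hx⟩) hbdd (hatt x hx)

/-- the extended buyer payoff function of an IC, IR, NPT mechanism
belongs to `B_Γ`, and `q(x)` is a subgradient of it at every `x ∈ ℝ₊^k`. -/
theorem stmt1 {k : ℕ} (hk : 1 ≤ k) (Γ : Set (E k)) (hΓne : Γ.Nonempty)
    (hΓc : IsCompact Γ) (hΓ : Γ ⊆ orthant k)
    (q : E k → E k) (s : E k → ℝ)
    (hq : IsAlloc Γ q) (hIC : IsIC q s) (hIR : IsIR q s) (hNPT : IsNPT s) :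
    BClass Γ (extPayoff q s) ∧
      ∀ x ∈ orthant k, q x ∈ Subgrad (extPayoff q s) x ∩ Γ :=
  stmt1_general Γ hΓc q s hq hIC hIR hNPT
end
end

section
/- Let b ∈ B_Γ. Then there exists an IC, IR, and NPT Γ-mechanism μ = (q,s) whose buyer payoff function equals b on ℝ_+^k (i.e., q(x)·x − s(x) = b(x) for all x ∈ ℝ_+^k) and such that q(x) ∈ ∂b(x) ∩ Γ for every x ∈ ℝ_+^k. -/
open MeasureTheory Filter

noncomputable section

/-!
Choose a subgradient selection `q x ∈ ∂b(x) ∩ Γ` and charge `s x = q(x)·x − b(x)`, so that the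
payoff is `b` by construction. The utility of reporting `y` at true type `x` is then the supporting
affine minorant `z ↦ b(y) + q(y)·(z − y)` evaluated at `x`, which is at most `b(x)`: this is IC.
The same inequality at `x = 0` with `b 0 = 0` gives NPT, and `b ≥ q(0)·x ≥ 0` on the orthant,
since `Γ` lies in the orthant, gives IR.
-/

open Finset

section Dotp

variable {k : ℕ}

lemma dotp_sub_right (g x y : E k) : dotp g (x - y) = dotp g x - dotp g y := by
  simp only [dotp, PiLp.sub_apply, mul_sub, sum_sub_distrib]

@[simp]
lemma dotp_zero_right (g : E k) : dotp g 0 = 0 := by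
  simp [dotp]

lemma dotp_nonneg_of_mem_orthant {g x : E k} (hg : g ∈ orthant k) (hx : x ∈ orthant k) :
    0 ≤ dotp g x :=
  sum_nonneg fun i _ => mul_nonneg (hg i) (hx i)

end Dotp

section Subgrad

variable {k : ℕ} {b : E k → ℝ} {g x y : E k}

lemma sub_le_of_mem_subgrad (hg : g ∈ Subgrad b y) (x : E k) :
    dotp g x - (dotp g y - b y) ≤ b x := by
  have := hg x
  rw [dotp_sub_right] at this
  linarith

lemma sub_nonneg_of_mem_subgrad (hb0 : b 0 = 0) (hg : g ∈ Subgrad b x) :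
    0 ≤ dotp g x - b x := by
  simpa [hb0] using sub_le_of_mem_subgrad hg 0

lemma nonneg_of_mem_subgrad_zero (hb0 : b 0 = 0) (hg : g ∈ Subgrad b 0) (hg' : g ∈ orthant k)
    (hx : x ∈ orthant k) : 0 ≤ b x := by
  have := sub_le_of_mem_subgrad hg x
  rw [dotp_zero_right, hb0] at this
  linarith [dotp_nonneg_of_mem_orthant hg' hx]

lemma isIC_of_mem_subgrad {q : E k → E k}
    (hq : ∀ x ∈ orthant k, q x ∈ Subgrad b x) :
    IsIC q (fun x => dotp (q x) x - b x) := by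
  intro x _ y hy
  simp only [sub_sub_cancel]
  exact sub_le_of_mem_subgrad (hq y hy) x

end Subgrad

theorem stmt2_general {k : ℕ} (Γ : Set (E k)) (hΓ : Γ ⊆ orthant k)
    (b : E k → ℝ) (hb : BClass Γ b) :
    ∃ q : E k → E k, ∃ s : E k → ℝ,
      IsAlloc Γ q ∧ IsIC q s ∧ IsIR q s ∧ IsNPT s ∧
      (∀ x ∈ orthant k, dotp (q x) x - s x = b x) ∧
      (∀ x ∈ orthant k, q x ∈ Subgrad b x ∩ Γ) := by
  obtain ⟨-, hb0, hsub⟩ := hb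
  choose q hq using hsub
  refine ⟨q, fun x => dotp (q x) x - b x, fun x _ => (hq x).2,
    isIC_of_mem_subgrad fun x _ => (hq x).1, ?_, fun x _ => sub_nonneg_of_mem_subgrad hb0 (hq x).1,
    fun x _ => sub_sub_cancel _ _, fun x _ => hq x⟩
  intro x hx
  rw [sub_sub_cancel]
  exact nonneg_of_mem_subgrad_zero hb0 (hq 0).1 (hΓ (hq 0).2) hx

/-- every `b ∈ B_Γ` is the buyer payoff function of some
IC, IR, NPT `Γ`-mechanism whose allocation is a subgradient selection of `b`. -/
theorem stmt2 {k : ℕ} (hk : 1 ≤ k) (Γ : Set (E k)) (hΓne : Γ.Nonempty)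
    (hΓc : IsCompact Γ) (hΓ : Γ ⊆ orthant k)
    (b : E k → ℝ) (hb : BClass Γ b) :
    ∃ q : E k → E k, ∃ s : E k → ℝ,
      IsAlloc Γ q ∧ IsIC q s ∧ IsIR q s ∧ IsNPT s ∧
      (∀ x ∈ orthant k, dotp (q x) x - s x = b x) ∧
      (∀ x ∈ orthant k, q x ∈ Subgrad b x ∩ Γ) :=
  stmt2_general Γ hΓ b hb
end
end

section
/- Let μ_n = (q_n,s_n), for n = 1,2,..., and μ = (q,s) be IC, IR, and NPT Γ-mechanisms with extended buyer payoff functions b_n and b respectively. If every μ_n is monotonic, b_n converges pointwise to b on ℝ^k, and μ is seller favorable, then μ is monotonic as well, i.e., s(y) ≥ s(x) whenever y ≥ x coordinatewise in ℝ_+^k. -/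
open MeasureTheory Filter

noncomputable section

/-- A monotonic mechanism: payments nondecreasing in the (coordinatewise) valuation. -/
def MonotonicPay {k : ℕ} (s : E k → ℝ) : Prop :=
  ∀ x ∈ orthant k, ∀ y ∈ orthant k, (∀ i, x i ≤ y i) → s x ≤ s y

/-!
Incentive compatibility makes `b(u) = q(u)·u − s(u)` a maximum on the orthant, whence
`s(u) ≤ (b((1+δ)u) − (1+δ) b(u)) / δ ≤ s((1+δ)u)` for `δ > 0`. For the monotonic mechanisms
this squeezes `s_n((1+δ)x) ≤ s_n((1+δ)y)` between such quotients of `b_n` at `x` (step `δ`) and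
at `(1+δ)y` (step `ε`), and the resulting inequality passes to the limit `b`. As `b` is convex
along rays, the quotient at `x` tends to `b′(x;x) − b(x) = s(x)` as `δ → 0⁺`, while the one at
`(1+δ)y` tends by continuity to the quotient at `y`, which tends to `s(y)` as `ε → 0⁺`.
-/

open Set Topology

section Payoff

variable {k : ℕ}

lemma smul_mem_orthant {u : E k} (hu : u ∈ orthant k) {t : ℝ} (ht : 0 ≤ t) :
    t • u ∈ orthant k :=
  fun i => mul_nonneg ht (hu i)

lemma dotp_smul_right (g : E k) (t : ℝ) (x : E k) : dotp g (t • x) = t * dotp g x := by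
  simp only [dotp, PiLp.smul_apply, smul_eq_mul, Finset.mul_sum]
  exact Finset.sum_congr rfl fun i _ => by ring

variable {q : E k → E k} {s : E k → ℝ}

lemma extPayoff_eq (hIC : IsIC q s) {x : E k} (hx : x ∈ orthant k) :
    extPayoff q s x = dotp (q x) x - s x :=
  IsGreatest.csSup_eq ⟨⟨x, hx, rfl⟩, by rintro _ ⟨z, hz, rfl⟩; exact hIC x hx z hz⟩

lemma le_extPayoff (hIC : IsIC q s) {x w : E k} (hx : x ∈ orthant k) (hw : w ∈ orthant k) :
    dotp (q w) x - s w ≤ extPayoff q s x :=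
  (extPayoff_eq hIC hx).symm ▸ hIC x hx w hw

lemma sub_one_mul_le_extPayoff_smul_sub (hIC : IsIC q s) {u : E k} (hu : u ∈ orthant k)
    {t : ℝ} (ht : 0 ≤ t) :
    (t - 1) * s u ≤ extPayoff q s (t • u) - t * extPayoff q s u := by
  have h := le_extPayoff hIC (smul_mem_orthant hu ht) hu
  rw [dotp_smul_right] at h
  rw [extPayoff_eq hIC hu]
  linarith

lemma extPayoff_smul_sub_le (hIC : IsIC q s) {u : E k} (hu : u ∈ orthant k)
    {t : ℝ} (ht : 0 ≤ t) :
    extPayoff q s (t • u) - t * extPayoff q s u ≤ (t - 1) * s (t • u) := by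
  have htu := smul_mem_orthant hu ht
  have h := mul_le_mul_of_nonneg_left (le_extPayoff hIC hu htu) ht
  rw [extPayoff_eq hIC htu, dotp_smul_right]
  linarith

lemma convexOn_extPayoff_smul (hIC : IsIC q s) {u : E k} (hu : u ∈ orthant k) :
    ConvexOn ℝ (Ici 0) fun t : ℝ => extPayoff q s (t • u) := by
  refine ⟨convex_Ici 0, fun t₁ ht₁ t₂ ht₂ a b ha hb hab => ?_⟩
  have ht : 0 ≤ a * t₁ + b * t₂ := by simp only [mem_Ici] at *; positivity
  have h₁ := le_extPayoff hIC (smul_mem_orthant hu ht₁) (smul_mem_orthant hu ht)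
  have h₂ := le_extPayoff hIC (smul_mem_orthant hu ht₂) (smul_mem_orthant hu ht)
  simp only [smul_eq_mul, extPayoff_eq hIC (smul_mem_orthant hu ht), dotp_smul_right] at h₁ h₂ ⊢
  linear_combination mul_le_mul_of_nonneg_left h₁ ha + mul_le_mul_of_nonneg_left h₂ hb
    + s ((a * t₁ + b * t₂) • u) * hab

end Payoff

section PaymentQuot

variable {k : ℕ}

/-- Difference-quotient approximation of the seller-favorable payment `b′(u;u) − b(u)`. -/
def paymentQuot (b : E k → ℝ) (u : E k) (δ : ℝ) : ℝ :=
  (b ((1 + δ) • u) - (1 + δ) * b u) / δ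

lemma tendsto_paymentQuot_of_tendsto {ι : Type*} {l : Filter ι} {f : ι → E k → ℝ}
    {g : E k → ℝ} (hf : ∀ x, Tendsto (fun n => f n x) l (𝓝 (g x))) (u : E k) (δ : ℝ) :
    Tendsto (fun n => paymentQuot (f n) u δ) l (𝓝 (paymentQuot g u δ)) :=
  ((hf _).sub ((hf u).const_mul _)).div_const δ

lemma paymentQuot_eq (b : E k → ℝ) (u : E k) {δ : ℝ} (hδ : δ ≠ 0) :
    paymentQuot b u δ = (b (u + δ • u) - b u) / δ - b u := by
  rw [paymentQuot, add_smul, one_smul]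
  field_simp
  ring

variable {q : E k → E k} {s : E k → ℝ} {u : E k}

lemma le_paymentQuot (hIC : IsIC q s) (hu : u ∈ orthant k) {δ : ℝ} (hδ : 0 < δ) :
    s u ≤ paymentQuot (extPayoff q s) u δ := by
  have h := sub_one_mul_le_extPayoff_smul_sub hIC hu (t := 1 + δ) (by linarith)
  rw [add_sub_cancel_left] at h
  rw [paymentQuot, le_div_iff₀ hδ]
  linarith

lemma paymentQuot_le (hIC : IsIC q s) (hu : u ∈ orthant k) {δ : ℝ} (hδ : 0 < δ) :
    paymentQuot (extPayoff q s) u δ ≤ s ((1 + δ) • u) := by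
  have h := extPayoff_smul_sub_le hIC hu (t := 1 + δ) (by linarith)
  rw [add_sub_cancel_left] at h
  rw [paymentQuot, div_le_iff₀ hδ]
  linarith

lemma paymentQuot_le_paymentQuot_of_monotonicPay (hIC : IsIC q s) (hMon : MonotonicPay s)
    {x y : E k} (hx : x ∈ orthant k) (hy : y ∈ orthant k) (hxy : ∀ i, x i ≤ y i)
    {δ ε : ℝ} (hδ : 0 < δ) (hε : 0 < ε) :
    paymentQuot (extPayoff q s) x δ ≤ paymentQuot (extPayoff q s) ((1 + δ) • y) ε := by
  have h1δ : 0 ≤ 1 + δ := by linarith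
  calc paymentQuot (extPayoff q s) x δ ≤ s ((1 + δ) • x) := paymentQuot_le hIC hx hδ
    _ ≤ s ((1 + δ) • y) :=
      hMon _ (smul_mem_orthant hx h1δ) _ (smul_mem_orthant hy h1δ)
        fun i => mul_le_mul_of_nonneg_left (hxy i) h1δ
    _ ≤ paymentQuot (extPayoff q s) ((1 + δ) • y) ε :=
      le_paymentQuot hIC (smul_mem_orthant hy h1δ) hε

lemma monotoneOn_paymentQuot (hIC : IsIC q s) (hu : u ∈ orthant k) :
    MonotoneOn (paymentQuot (extPayoff q s) u) (Ioi 0) := by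
  intro δ₁ (hδ₁ : 0 < δ₁) δ₂ (hδ₂ : 0 < δ₂) hδ
  have h := (convexOn_extPayoff_smul hIC hu).secant_mono (a := 1) (x := 1 + δ₁) (y := 1 + δ₂)
    (mem_Ici.mpr zero_le_one) (mem_Ici.mpr (by linarith)) (mem_Ici.mpr (by linarith))
    (by linarith) (by linarith) (by linarith)
  simp only [one_smul, add_sub_cancel_left, add_smul] at h
  rw [paymentQuot_eq _ _ (ne_of_gt hδ₁), paymentQuot_eq _ _ (ne_of_gt hδ₂)]
  linarith

lemma tendsto_paymentQuot (hIC : IsIC q s) (hSF : SellerFavorable q s) (hu : u ∈ orthant k) :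
    Tendsto (paymentQuot (extPayoff q s) u) (𝓝[>] 0) (𝓝 (s u)) := by
  set b := extPayoff q s
  have hbdd : BddBelow (paymentQuot b u '' Ioi 0) :=
    ⟨s u, by rintro _ ⟨δ, hδ, rfl⟩; exact le_paymentQuot hIC hu hδ⟩
  have hlim := (monotoneOn_paymentQuot hIC hu).tendsto_nhdsGT hbdd
  have hdiff : Tendsto (fun δ => (b (u + δ • u) - b u) / δ) (𝓝[>] 0)
      (𝓝 (sInf (paymentQuot b u '' Ioi 0) + b u)) := by
    refine (hlim.add_const (b u)).congr' ?_
    filter_upwards [self_mem_nhdsWithin] with δ (hδ : 0 < δ)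
    rw [paymentQuot_eq b u hδ.ne']
    ring
  have hs : s u = sInf (paymentQuot b u '' Ioi 0) := by
    rw [hSF u hu, dirDeriv, hdiff.limUnder_eq, add_sub_cancel_right]
  rwa [hs]

lemma continuousOn_extPayoff_smul (hIC : IsIC q s) (hu : u ∈ orthant k) :
    ContinuousOn (fun t : ℝ => extPayoff q s (t • u)) (Ioi 0) := by
  simpa using (convexOn_extPayoff_smul hIC hu).continuousOn_interior

lemma tendsto_paymentQuot_smul (hIC : IsIC q s) (hu : u ∈ orthant k) {ε : ℝ} (hε : 0 < 1 + ε) :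
    Tendsto (fun δ : ℝ => paymentQuot (extPayoff q s) ((1 + δ) • u) ε) (𝓝[>] 0)
      (𝓝 (paymentQuot (extPayoff q s) u ε)) := by
  set φ := fun t : ℝ => extPayoff q s (t • u)
  have hφ : ∀ t : ℝ, 0 < t → ContinuousAt φ t := fun t ht =>
    (continuousOn_extPayoff_smul hIC hu).continuousAt (Ioi_mem_nhds ht)
  have hcont :
      ContinuousAt (fun δ : ℝ => (φ ((1 + ε) * (1 + δ)) - (1 + ε) * φ (1 + δ)) / ε) 0 :=
    ((ContinuousAt.comp_of_eq (hφ _ hε) (by fun_prop) (by ring)).sub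
      (continuousAt_const.mul
        (ContinuousAt.comp_of_eq (hφ 1 one_pos) (by fun_prop) (by ring)))).div_const ε
  have h := hcont.tendsto.mono_left (nhdsWithin_le_nhds (s := Ioi 0))
  simpa only [φ, paymentQuot, smul_smul, add_zero, mul_one, one_mul, one_smul] using h

end PaymentQuot

theorem stmt9_general {k : ℕ}
    (qn : ℕ → E k → E k) (sn : ℕ → E k → ℝ)
    (hICn : ∀ n, IsIC (qn n) (sn n))
    (hMonn : ∀ n, MonotonicPay (sn n))
    (q : E k → E k) (s : E k → ℝ)
    (hIC : IsIC q s)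
    (hconv : ∀ x : E k,
      Tendsto (fun n => extPayoff (qn n) (sn n) x) atTop (nhds (extPayoff q s x)))
    (hSF : SellerFavorable q s) :
    MonotonicPay s := by
  intro x hx y hy hxy
  have hlimit : ∀ δ > 0, ∀ ε > 0,
      paymentQuot (extPayoff q s) x δ ≤ paymentQuot (extPayoff q s) ((1 + δ) • y) ε :=
    fun δ hδ ε hε => le_of_tendsto_of_tendsto' (tendsto_paymentQuot_of_tendsto hconv x δ)
      (tendsto_paymentQuot_of_tendsto hconv _ ε)
      fun n => paymentQuot_le_paymentQuot_of_monotonicPay (hICn n) (hMonn n) hx hy hxy hδ hε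
  have hsx : ∀ ε > 0, s x ≤ paymentQuot (extPayoff q s) y ε := fun ε hε =>
    le_of_tendsto_of_tendsto (tendsto_paymentQuot hIC hSF hx)
      (tendsto_paymentQuot_smul hIC hy (by linarith))
      (eventually_nhdsWithin_of_forall fun δ hδ => hlimit δ hδ ε hε)
  exact ge_of_tendsto (tendsto_paymentQuot hIC hSF hy) (eventually_nhdsWithin_of_forall hsx)

/-- a seller-favorable pointwise limit of monotonic IC, IR, NPT
mechanisms is monotonic. -/
theorem stmt9 {k : ℕ} (hk : 1 ≤ k) (Γ : Set (E k)) (hΓne : Γ.Nonempty)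
    (hΓc : IsCompact Γ) (hΓ : Γ ⊆ orthant k)
    (qn : ℕ → E k → E k) (sn : ℕ → E k → ℝ)
    (hqn : ∀ n, IsAlloc Γ (qn n)) (hICn : ∀ n, IsIC (qn n) (sn n))
    (hIRn : ∀ n, IsIR (qn n) (sn n)) (hNPTn : ∀ n, IsNPT (sn n))
    (hMonn : ∀ n, MonotonicPay (sn n))
    (q : E k → E k) (s : E k → ℝ)
    (hq : IsAlloc Γ q) (hIC : IsIC q s) (hIR : IsIR q s) (hNPT : IsNPT s)
    (hconv : ∀ x : E k,
      Tendsto (fun n => extPayoff (qn n) (sn n) x) atTop (nhds (extPayoff q s x)))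
    (hSF : SellerFavorable q s) :
    MonotonicPay s :=
  stmt9_general qn sn hICn hMonn q s hIC hconv hSF
end
end
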